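/- There exist a real number ε* > 0, a finite set Λ of unit vectors in ℝ³ all of whose coordinates are rational, an assignment to each η ∈ Λ of two vectors η₁, η₂ ∈ ℝ³ such that (η, η₁, η₂) is an orthonormal frame, functions Γ_η : Sym³ × Skew³ → ℝ (one for each η ∈ Λ) and a function p : Sym³ × Skew³ → ℝ, all smooth on the open ball of radius ε* centered at (0,0), with Γ_η strictly positive on that ball, such that every pair (R, G) with R a symmetric 3×3 real matrix, G a skew-symmetric 3×3 real matrix, and ‖R‖ + ‖G‖ < ε*, satisfies the two simultaneous identities: R − p(R,G)·Id = Σ_{η∈Λ} Γ_η(R,G)² · (η₁ ⊗ η₁ − η₂ ⊗ η₂) and G = Σ_{η∈Λ} Γ_η(R,G)² · (η₁ ⊗ η₂ − η₂ ⊗ η₁). Moreover, for any prescribed finite set F of unit vectors in ℝ³, the set Λ can be chosen so that Λ ∩ F = ∅. -/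

import Mathlib

open scoped BigOperators

attribute [local instance] Matrix.normedAddCommGroup Matrix.normedSpace

/-- Euclidean dot product on `ℝ³` (vectors as `Fin 3 → ℝ`). -/
def dot3 (a b : Fin 3 → ℝ) : ℝ := ∑ i, a i * b i

/-- `(e₀, e₁, e₂)` is an orthonormal frame (orthonormal basis) of `ℝ³`. -/
def IsONFrame (e₀ e₁ e₂ : Fin 3 → ℝ) : Prop :=
  dot3 e₀ e₀ = 1 ∧ dot3 e₁ e₁ = 1 ∧ dot3 e₂ e₂ = 1 ∧
  dot3 e₀ e₁ = 0 ∧ dot3 e₀ e₂ = 0 ∧ dot3 e₁ e₂ = 0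

/-- All three coordinates of a vector are rational. -/
def RatCoords (a : Fin 3 → ℝ) : Prop := ∀ i, ∃ q : ℚ, a i = (q : ℝ)

noncomputable section CGLaux
namespace CGL
open Matrix

abbrev M3 := Matrix (Fin 3) (Fin 3) ℝ
abbrev X3 := M3 × M3

def bz : Fin 8 → Fin 3 → ℤ := ![![0, 3, 0], ![3, 0, 0], ![-1, 2, 2], ![-1, 2, -2], ![-2, 2, 1], ![-2, 2, -1], ![-2, 1, 2], ![-2, 1, -2]]
def f1z : Fin 8 → Fin 3 → ℤ := ![![3, 0, 0], ![0, -3, 0], ![2, -1, 2], ![2, -1, -2], ![2, 1, 2], ![2, 1, -2], ![1, -2, 2], ![1, -2, -2]]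
def f2z : Fin 8 → Fin 3 → ℤ := ![![0, 0, -3], ![0, 0, -3], ![2, 2, -1], ![-2, -2, -1], ![1, 2, -2], ![-1, -2, -2], ![2, 2, 1], ![-2, -2, 1]]
def Cr : Fin 8 → Fin 3 → Fin 3 → ℝ := ![![![3/2, -3/2, 0], ![0, -1/2, 0], ![0, 0, -1]], ![![-7/6, 1, 0], ![0, 5/6, 0], ![0, 0, 1/3]], ![![-1/4, 0, 9/4], ![0, -1/4, -3/2], ![0, 0, 1/2]], ![![-1/4, 0, -9/4], ![0, -1/4, 3/2], ![0, 0, 1/2]], ![![-1, 3/2, -3/2], ![0, 1/2, 3/2], ![0, 0, 1/2]], ![![-1, 3/2, 3/2], ![0, 1/2, -3/2], ![0, 0, 1/2]], ![![1/4, -3/4, -3/2], ![0, 1/4, 3/4], ![0, 0, -1/2]], ![![1/4, -3/4, 3/2], ![0, 1/4, -3/4], ![0, 0, -1/2]]]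
def Dr : Fin 8 → Fin 3 → Fin 3 → ℝ := ![![![0, 0, 3/2], ![0, 0, -1/2], ![0, 0, 0]], ![![0, 0, -3/2], ![0, 0, 1/2], ![0, 0, 0]], ![![0, -3/2, -3/4], ![0, 0, 3/4], ![0, 0, 0]], ![![0, 3/2, -3/4], ![0, 0, 3/4], ![0, 0, 0]], ![![0, 3/2, -3/2], ![0, 0, 0], ![0, 0, 0]], ![![0, -3/2, -3/2], ![0, 0, 0], ![0, 0, 0]], ![![0, 3/2, 3/4], ![0, 0, -3/4], ![0, 0, 0]], ![![0, -3/2, 3/4], ![0, 0, -3/4], ![0, 0, 0]]]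

def bvz : Fin 8 × Bool → Fin 3 → ℤ
  | (k, true) => bz k
  | (k, false) => fun i => -bz k i
def w1z : Fin 8 × Bool → Fin 3 → ℤ
  | (k, true) => f1z k
  | (k, false) => f2z k
def w2z : Fin 8 × Bool → Fin 3 → ℤ
  | (k, true) => f2z k
  | (k, false) => f1z k
def sg : Fin 8 × Bool → ℝ
  | (_, true) => 1
  | (_, false) => -1

def bv (p : Fin 8 × Bool) : Fin 3 → ℝ := fun i => (bvz p i : ℝ) / 3
def w1 (p : Fin 8 × Bool) : Fin 3 → ℝ := fun i => (w1z p i : ℝ) / 3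
def w2 (p : Fin 8 × Bool) : Fin 3 → ℝ := fun i => (w2z p i : ℝ) / 3

def dd (k : Fin 8) (x : X3) : ℝ :=
  ∑ i, ∑ j, (Cr k i j * x.1 i j + Dr k i j * x.2 i j)

def Qq (n : ℕ) : Matrix (Fin 3) (Fin 3) ℚ :=
  ![![(1 - (n:ℚ)^2)/(1 + (n:ℚ)^2), -(2*(n:ℚ))/(1 + (n:ℚ)^2), 0],
    ![(2*(n:ℚ))/(1 + (n:ℚ)^2), (1 - (n:ℚ)^2)/(1 + (n:ℚ)^2), 0],
    ![0, 0, 1]]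

def Qr (n : ℕ) : M3 := (Qq n).map ((↑) : ℚ → ℝ)

def conj (n : ℕ) (x : X3) : X3 := ((Qr n)ᵀ * x.1 * Qr n, (Qr n)ᵀ * x.2 * Qr n)

def ccf (n : ℕ) (p : Fin 8 × Bool) (x : X3) : ℝ := 1 + sg p * dd p.1 (conj n x) / 2

open Classical in
def pidx (n : ℕ) (w : Fin 3 → ℝ) : Fin 8 × Bool :=
  if h : ∃ p, Qr n *ᵥ bv p = w then h.choose else (0, true)

/-! ### decidable integer facts -/

lemma bvz_inj : Function.Injective bvz := by decide

lemma zdots : ∀ p : Fin 8 × Bool,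
    (∑ i, bvz p i * bvz p i) = 9 ∧ (∑ i, w1z p i * w1z p i) = 9 ∧
    (∑ i, w2z p i * w2z p i) = 9 ∧ (∑ i, bvz p i * w1z p i) = 0 ∧
    (∑ i, bvz p i * w2z p i) = 0 ∧ (∑ i, w1z p i * w2z p i) = 0 := by decide

lemma off_axis : ∀ p : Fin 8 × Bool, bvz p 0 ≠ 0 ∨ bvz p 1 ≠ 0 := by decide

/-! ### rotation matrix facts -/

lemma Qq_orth (n : ℕ) : (Qq n)ᵀ * Qq n = 1 := by
  have h : ((1:ℚ) + (n:ℚ)^2) ≠ 0 := by positivity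
  ext i j
  fin_cases i <;> fin_cases j <;>
    · simp only [Matrix.mul_apply, Matrix.transpose_apply, Fin.sum_univ_three, Matrix.one_apply]
      simp [Qq, Matrix.mul_apply, Fin.sum_univ_three, Matrix.one_apply]
      try field_simp
      try ring

lemma Qq_orth' (n : ℕ) : Qq n * (Qq n)ᵀ = 1 := by
  have h : ((1:ℚ) + (n:ℚ)^2) ≠ 0 := by positivity
  ext i j
  fin_cases i <;> fin_cases j <;>
    · simp only [Matrix.mul_apply, Matrix.transpose_apply, Fin.sum_univ_three, Matrix.one_apply]
      simp [Qq, Matrix.mul_apply, Fin.sum_univ_three, Matrix.one_apply]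
      try field_simp
      try ring

lemma Qr_eq_map (n : ℕ) : Qr n = (Qq n).map (Rat.castHom ℝ) := rfl

lemma Qr_orth (n : ℕ) : (Qr n)ᵀ * Qr n = 1 := by
  rw [Qr_eq_map, ← Matrix.transpose_map, ← Matrix.map_mul, Qq_orth,
    Matrix.map_one _ (by simp) (by simp)]

lemma Qr_orth' (n : ℕ) : Qr n * (Qr n)ᵀ = 1 := by
  rw [Qr_eq_map, ← Matrix.transpose_map, ← Matrix.map_mul, Qq_orth',
    Matrix.map_one _ (by simp) (by simp)]

lemma Q_bound (n : ℕ) : ∀ i j, |Qr n i j| ≤ 1 := by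
  have h : (0:ℝ) < 1 + (n:ℝ)^2 := by positivity
  intro i j
  fin_cases i <;> fin_cases j <;>
    · simp only [Qr, Matrix.map_apply]
      simp [Qr, Qq, Matrix.map_apply]
      try push_cast
      try
        rw [abs_div, div_le_one (by positivity), abs_of_pos h, abs_le]
        constructor <;> nlinarith [sq_nonneg ((n:ℝ) - 1), sq_nonneg ((n:ℝ) + 1)]

/-! ### injectivity -/

lemma bv_inj : Function.Injective bv := by
  intro p q h
  apply bvz_inj
  funext i
  have h3 := congrFun h i
  simp only [bv] at h3
  field_simp at h3
  exact_mod_cast h3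

lemma Qbv_inj (n : ℕ) : Function.Injective (fun p => Qr n *ᵥ bv p) := by
  intro p q h
  apply bv_inj
  have h2 := congrArg (fun v => (Qr n)ᵀ *ᵥ v) h
  simpa [Matrix.mulVec_mulVec, Qr_orth n, Matrix.one_mulVec] using h2

lemma pidx_spec (n : ℕ) (p : Fin 8 × Bool) : pidx n (Qr n *ᵥ bv p) = p := by
  unfold pidx
  rw [dif_pos ⟨p, rfl⟩]
  exact Qbv_inj n (Exists.choose_spec (⟨p, rfl⟩ : ∃ q, Qr n *ᵥ bv q = Qr n *ᵥ bv p))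

/-! ### injectivity in the rotation parameter -/

lemma Qn_inj (p : Fin 8 × Bool) : Function.Injective (fun n : ℕ => Qr n *ᵥ bv p) := by
  intro n m h
  have h0 := congrFun h 0
  have h1 := congrFun h 1
  simp only [Qr, Matrix.map_apply, Matrix.mulVec, dotProduct, Fin.sum_univ_three] at h0 h1
  simp only [Qr, Qq, bv, Matrix.mulVec, dotProduct, Fin.sum_univ_three,
    Matrix.map_apply, Matrix.cons_val', Matrix.cons_val_zero, Matrix.cons_val_one,
    Matrix.head_cons, Matrix.empty_val', Matrix.cons_val_fin_one, Matrix.head_fin_const,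
    Matrix.cons_val_two, Matrix.tail_cons] at h0 h1
  push_cast at h0 h1
  set v0 : ℝ := (bvz p 0 : ℝ) with hv0
  set v1 : ℝ := (bvz p 1 : ℝ) with hv1
  have hdn : (0:ℝ) < 1 + (n:ℝ)^2 := by positivity
  have hdm : (0:ℝ) < 1 + (m:ℝ)^2 := by positivity
  have hA : ((1 - (n:ℝ)^2)/(1 + (n:ℝ)^2) - (1 - (m:ℝ)^2)/(1 + (m:ℝ)^2)) * v0
      = ((2*(n:ℝ))/(1 + (n:ℝ)^2) - (2*(m:ℝ))/(1 + (m:ℝ)^2)) * v1 := by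
    linear_combination 3 * h0
  have hB : ((2*(n:ℝ))/(1 + (n:ℝ)^2) - (2*(m:ℝ))/(1 + (m:ℝ)^2)) * v0
      = -(((1 - (n:ℝ)^2)/(1 + (n:ℝ)^2) - (1 - (m:ℝ)^2)/(1 + (m:ℝ)^2)) * v1) := by
    linear_combination 3 * h1
  have hvv : 0 < v0^2 + v1^2 := by
    rcases off_axis p with hz | hz
    · have hne : v0 ≠ 0 := by rw [hv0]; exact_mod_cast hz
      nlinarith [abs_pos.mpr hne, sq_abs v0, sq_nonneg v1]
    · have hne : v1 ≠ 0 := by rw [hv1]; exact_mod_cast hz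
      nlinarith [abs_pos.mpr hne, sq_abs v1, sq_nonneg v0]
  have hA2 : ((1 - (n:ℝ)^2)/(1 + (n:ℝ)^2) - (1 - (m:ℝ)^2)/(1 + (m:ℝ)^2)) * (v0^2 + v1^2) = 0 := by
    linear_combination v0 * hA + v1 * hB
  have hc : (1 - (n:ℝ)^2)/(1 + (n:ℝ)^2) = (1 - (m:ℝ)^2)/(1 + (m:ℝ)^2) := by
    rcases mul_eq_zero.mp hA2 with h' | h'
    · linarith [sub_eq_zero.mp h']
    · exact absurd h' (ne_of_gt hvv)
  have hc' : (1 - (n:ℝ)^2) * (1 + (m:ℝ)^2) = (1 - (m:ℝ)^2) * (1 + (n:ℝ)^2) :=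
    (div_eq_div_iff hdn.ne' hdm.ne').mp hc
  have hfac : ((n:ℝ) - m) * ((n:ℝ) + m) = 0 := by linear_combination -hc'/2
  have hnm : (n:ℝ) = (m:ℝ) := by
    rcases mul_eq_zero.mp hfac with h' | h'
    · linarith
    · have hn1 : (0:ℝ) ≤ (n:ℝ) := Nat.cast_nonneg n
      have hn2 : (0:ℝ) ≤ (m:ℝ) := Nat.cast_nonneg m
      linarith
  exact_mod_cast hnm

set_option maxHeartbeats 1000000

/-! ### dot products and frames -/

lemma dot3_eq (a b : Fin 3 → ℝ) : dot3 a b = a ⬝ᵥ b := by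
  simp [dot3, dotProduct]

lemma dot3_Q (Q : M3) (hQ : Qᵀ * Q = 1) (a b : Fin 3 → ℝ) :
    dot3 (Q *ᵥ a) (Q *ᵥ b) = dot3 a b := by
  rw [dot3_eq, dot3_eq, Matrix.dotProduct_mulVec,
    show Q *ᵥ a = a ᵥ* Qᵀ by rw [Matrix.vecMul_transpose],
    Matrix.vecMul_vecMul, hQ, Matrix.vecMul_one]

lemma dot3_cast (az bz : Fin 3 → ℤ) :
    dot3 (fun i => (az i : ℝ)/3) (fun i => (bz i : ℝ)/3)
      = ((∑ i, az i * bz i : ℤ) : ℝ)/9 := by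
  simp only [dot3, Fin.sum_univ_three]
  push_cast
  ring

lemma frames (p : Fin 8 × Bool) : IsONFrame (bv p) (w1 p) (w2 p) := by
  obtain ⟨d1, d2, d3, d4, d5, d6⟩ := zdots p
  have e1 : dot3 (bv p) (bv p) = ((∑ i, bvz p i * bvz p i : ℤ) : ℝ)/9 := dot3_cast _ _
  have e2 : dot3 (w1 p) (w1 p) = ((∑ i, w1z p i * w1z p i : ℤ) : ℝ)/9 := dot3_cast _ _
  have e3 : dot3 (w2 p) (w2 p) = ((∑ i, w2z p i * w2z p i : ℤ) : ℝ)/9 := dot3_cast _ _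
  have e4 : dot3 (bv p) (w1 p) = ((∑ i, bvz p i * w1z p i : ℤ) : ℝ)/9 := dot3_cast _ _
  have e5 : dot3 (bv p) (w2 p) = ((∑ i, bvz p i * w2z p i : ℤ) : ℝ)/9 := dot3_cast _ _
  have e6 : dot3 (w1 p) (w2 p) = ((∑ i, w1z p i * w2z p i : ℤ) : ℝ)/9 := dot3_cast _ _
  refine ⟨?_, ?_, ?_, ?_, ?_, ?_⟩
  · rw [e1, d1]; norm_num
  · rw [e2, d2]; norm_num
  · rw [e3, d3]; norm_num
  · rw [e4, d4]; norm_num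
  · rw [e5, d5]; norm_num
  · rw [e6, d6]; norm_num

/-! ### conjugation lemmas -/

lemma vmv_conj (Q : M3) (a b : Fin 3 → ℝ) :
    vecMulVec (Q *ᵥ a) (Q *ᵥ b) = Q * vecMulVec a b * Qᵀ := by
  ext i j
  simp [vecMulVec_apply, Matrix.mul_apply, Matrix.mulVec, dotProduct,
    Fin.sum_univ_three, Matrix.transpose_apply]
  ring

lemma unconj (n : ℕ) (M : M3) : Qr n * ((Qr n)ᵀ * M * Qr n) * (Qr n)ᵀ = M := by
  rw [← Matrix.mul_assoc, ← Matrix.mul_assoc, Qr_orth' n, Matrix.one_mul,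
    Matrix.mul_assoc, Qr_orth' n, Matrix.mul_one]

lemma trace_conj (n : ℕ) (M : M3) : ((Qr n)ᵀ * M * Qr n).trace = M.trace := by
  rw [Matrix.trace_mul_comm ((Qr n)ᵀ * M) (Qr n), ← Matrix.mul_assoc, Qr_orth' n, Matrix.one_mul]

lemma conj_symm (n : ℕ) {M : M3} (hM : M.IsSymm) : ((Qr n)ᵀ * M * Qr n).IsSymm := by
  show ((Qr n)ᵀ * M * Qr n)ᵀ = (Qr n)ᵀ * M * Qr n
  rw [Matrix.transpose_mul, Matrix.transpose_mul, Matrix.transpose_transpose, hM.eq,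
    Matrix.mul_assoc]

lemma conj_skew (n : ℕ) {M : M3} (hM : Mᵀ = -M) :
    ((Qr n)ᵀ * M * Qr n)ᵀ = -((Qr n)ᵀ * M * Qr n) := by
  rw [Matrix.transpose_mul, Matrix.transpose_mul, Matrix.transpose_transpose, hM,
    Matrix.neg_mul, Matrix.mul_neg, Matrix.mul_assoc]

/-! ### bounds -/

lemma Cr_bound : ∀ (k : Fin 8) (i j : Fin 3), |Cr k i j| ≤ 3 := by
  intro k i j
  fin_cases k <;> fin_cases i <;> fin_cases j <;> norm_num [Cr, abs_le]

lemma Dr_bound : ∀ (k : Fin 8) (i j : Fin 3), |Dr k i j| ≤ 3 := by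
  intro k i j
  fin_cases k <;> fin_cases i <;> fin_cases j <;> norm_num [Dr, abs_le]

lemma conj_entry (n : ℕ) (M : M3) (i j : Fin 3) :
    |((Qr n)ᵀ * M * Qr n) i j| ≤ 9 * ‖M‖ := by
  have hM : ∀ a b, |M a b| ≤ ‖M‖ := fun a b => Matrix.norm_entry_le_entrywise_sup_norm M
  have hQ : ∀ a b, |Qr n a b| ≤ 1 := Q_bound n
  have hMn : 0 ≤ ‖M‖ := norm_nonneg M
  have key : ∀ b, |∑ a, (Qr n)ᵀ i a * M a b| ≤ 3 * ‖M‖ := by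
    intro b
    calc |∑ a, (Qr n)ᵀ i a * M a b| ≤ ∑ a, |(Qr n)ᵀ i a * M a b| :=
          Finset.abs_sum_le_sum_abs _ _
      _ ≤ ∑ _a : Fin 3, ‖M‖ := by
          refine Finset.sum_le_sum fun a _ => ?_
          rw [abs_mul]
          have h1 : |(Qr n)ᵀ i a| ≤ 1 := by rw [Matrix.transpose_apply]; exact hQ a i
          nlinarith [abs_nonneg ((Qr n)ᵀ i a), abs_nonneg (M a b), hM a b]
      _ = 3 * ‖M‖ := by simp; try ring
  have hrw : ((Qr n)ᵀ * M * Qr n) i j = ∑ b, (∑ a, (Qr n)ᵀ i a * M a b) * Qr n b j := by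
    simp [Matrix.mul_apply]
  rw [hrw]
  calc |∑ b, (∑ a, (Qr n)ᵀ i a * M a b) * Qr n b j|
      ≤ ∑ b, |(∑ a, (Qr n)ᵀ i a * M a b) * Qr n b j| := Finset.abs_sum_le_sum_abs _ _
    _ ≤ ∑ _b : Fin 3, 3 * ‖M‖ := by
        refine Finset.sum_le_sum fun b _ => ?_
        rw [abs_mul]
        nlinarith [key b, hQ b j, abs_nonneg (∑ a, (Qr n)ᵀ i a * M a b),
          abs_nonneg (Qr n b j)]
    _ = 9 * ‖M‖ := by simp; try ring

lemma dd_bound (n : ℕ) (k : Fin 8) (x : X3) :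
    |dd k (conj n x)| ≤ 243 * (‖x.1‖ + ‖x.2‖) := by
  have hterm : ∀ i j : Fin 3,
      |Cr k i j * ((Qr n)ᵀ * x.1 * Qr n) i j + Dr k i j * ((Qr n)ᵀ * x.2 * Qr n) i j|
        ≤ 27 * ‖x.1‖ + 27 * ‖x.2‖ := by
    intro i j
    have h1 := conj_entry n x.1 i j
    have h2 := conj_entry n x.2 i j
    have c1 := Cr_bound k i j
    have c2 := Dr_bound k i j
    calc |Cr k i j * ((Qr n)ᵀ * x.1 * Qr n) i j + Dr k i j * ((Qr n)ᵀ * x.2 * Qr n) i j|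
        ≤ |Cr k i j * ((Qr n)ᵀ * x.1 * Qr n) i j| + |Dr k i j * ((Qr n)ᵀ * x.2 * Qr n) i j| :=
          abs_add_le _ _
      _ ≤ 27 * ‖x.1‖ + 27 * ‖x.2‖ := by
          rw [abs_mul, abs_mul]
          nlinarith [abs_nonneg (Cr k i j), abs_nonneg (Dr k i j),
            abs_nonneg (((Qr n)ᵀ * x.1 * Qr n) i j), abs_nonneg (((Qr n)ᵀ * x.2 * Qr n) i j),
            norm_nonneg x.1, norm_nonneg x.2]
  have hin : ∀ i : Fin 3,
      |∑ j, (Cr k i j * ((Qr n)ᵀ * x.1 * Qr n) i j + Dr k i j * ((Qr n)ᵀ * x.2 * Qr n) i j)|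
        ≤ 81 * ‖x.1‖ + 81 * ‖x.2‖ := by
    intro i
    calc |∑ j, (Cr k i j * ((Qr n)ᵀ * x.1 * Qr n) i j + Dr k i j * ((Qr n)ᵀ * x.2 * Qr n) i j)|
        ≤ ∑ j, |Cr k i j * ((Qr n)ᵀ * x.1 * Qr n) i j + Dr k i j * ((Qr n)ᵀ * x.2 * Qr n) i j| :=
          Finset.abs_sum_le_sum_abs _ _
      _ ≤ ∑ _j : Fin 3, (27 * ‖x.1‖ + 27 * ‖x.2‖) := Finset.sum_le_sum fun j _ => hterm i j
      _ = 81 * ‖x.1‖ + 81 * ‖x.2‖ := by simp; try ring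
  calc |dd k (conj n x)|
      ≤ ∑ i, |∑ j, (Cr k i j * ((Qr n)ᵀ * x.1 * Qr n) i j + Dr k i j * ((Qr n)ᵀ * x.2 * Qr n) i j)| := by
        unfold dd conj
        exact Finset.abs_sum_le_sum_abs _ _
    _ ≤ ∑ _i : Fin 3, (81 * ‖x.1‖ + 81 * ‖x.2‖) := Finset.sum_le_sum fun i _ => hin i
    _ = 243 * (‖x.1‖ + ‖x.2‖) := by simp; try ring

lemma sg_abs (p : Fin 8 × Bool) : |sg p| = 1 := by
  rcases p with ⟨k, _ | _⟩ <;> simp [sg]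

lemma ccf_pos (n : ℕ) (p : Fin 8 × Bool) {x : X3} (h : ‖x.1‖ + ‖x.2‖ < 1/250) :
    (1:ℝ)/2 < ccf n p x := by
  have hd := dd_bound n p.1 x
  have hs : |sg p * dd p.1 (conj n x)| = |dd p.1 (conj n x)| := by
    rw [abs_mul, sg_abs, one_mul]
  have h1 : sg p * dd p.1 (conj n x) ≥ -(243 * (‖x.1‖ + ‖x.2‖)) := by
    have := neg_abs_le (sg p * dd p.1 (conj n x))
    rw [hs] at this
    linarith
  unfold ccf
  linarith

/-! ### smoothness -/

lemma contDiff_entry1 (a b : Fin 3) : ContDiff ℝ (⊤ : ℕ∞) (fun x : X3 => x.1 a b) :=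
  contDiff_pi.mp ((contDiff_pi.mp contDiff_fst) a) b

lemma contDiff_entry2 (a b : Fin 3) : ContDiff ℝ (⊤ : ℕ∞) (fun x : X3 => x.2 a b) :=
  contDiff_pi.mp ((contDiff_pi.mp contDiff_snd) a) b

lemma contDiff_conj_entry1 (n : ℕ) (i j : Fin 3) :
    ContDiff ℝ (⊤ : ℕ∞) (fun x : X3 => ((Qr n)ᵀ * x.1 * Qr n) i j) := by
  have hrw : (fun x : X3 => ((Qr n)ᵀ * x.1 * Qr n) i j)
      = fun x => ∑ b, (∑ a, (Qr n)ᵀ i a * x.1 a b) * Qr n b j := by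
    funext x
    simp [Matrix.mul_apply]
  rw [hrw]
  exact ContDiff.sum fun b _ =>
    (ContDiff.sum fun a _ => contDiff_const.mul (contDiff_entry1 a b)).mul contDiff_const

lemma contDiff_conj_entry2 (n : ℕ) (i j : Fin 3) :
    ContDiff ℝ (⊤ : ℕ∞) (fun x : X3 => ((Qr n)ᵀ * x.2 * Qr n) i j) := by
  have hrw : (fun x : X3 => ((Qr n)ᵀ * x.2 * Qr n) i j)
      = fun x => ∑ b, (∑ a, (Qr n)ᵀ i a * x.2 a b) * Qr n b j := by
    funext x
    simp [Matrix.mul_apply]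
  rw [hrw]
  exact ContDiff.sum fun b _ =>
    (ContDiff.sum fun a _ => contDiff_const.mul (contDiff_entry2 a b)).mul contDiff_const

lemma contDiff_ccf (n : ℕ) (p : Fin 8 × Bool) : ContDiff ℝ (⊤ : ℕ∞) (ccf n p) := by
  unfold ccf dd conj
  exact contDiff_const.add ((contDiff_const.mul (ContDiff.sum fun i _ => ContDiff.sum fun j _ =>
    (contDiff_const.mul (contDiff_conj_entry1 n i j)).add
      (contDiff_const.mul (contDiff_conj_entry2 n i j)))).div_const 2)

lemma contDiff_pfun : ContDiff ℝ (⊤ : ℕ∞) (fun x : X3 => x.1.trace / 3) := by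
  have hrw : (fun x : X3 => x.1.trace / 3) = fun x => (∑ i, x.1 i i) / 3 := by
    funext x
    simp [Matrix.trace, Matrix.diag]
  rw [hrw]
  exact (ContDiff.sum fun i _ => contDiff_entry1 i i).div_const 3

set_option maxHeartbeats 2000000 in
theorem sumA (y : X3) (hR : y.1.IsSymm) (hG : y.2ᵀ = -y.2) :
    ∑ p : Fin 8 × Bool, (1 + sg p * dd p.1 y / 2) •
      (vecMulVec (w1 p) (w1 p) - vecMulVec (w2 p) (w2 p))
      = y.1 - (y.1.trace / 3) • 1 := by
  have h10 : y.1 1 0 = y.1 0 1 := hR.apply 0 1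
  have h20 : y.1 2 0 = y.1 0 2 := hR.apply 0 2
  have h21 : y.1 2 1 = y.1 1 2 := hR.apply 1 2
  have g10 : y.2 1 0 = -y.2 0 1 := by have := congrFun (congrFun hG 0) 1; simpa using this
  have g20 : y.2 2 0 = -y.2 0 2 := by have := congrFun (congrFun hG 0) 2; simpa using this
  have g21 : y.2 2 1 = -y.2 1 2 := by have := congrFun (congrFun hG 1) 2; simpa using this
  have g00 : y.2 0 0 = 0 := by have := congrFun (congrFun hG 0) 0; simp at this; linarith
  have g11 : y.2 1 1 = 0 := by have := congrFun (congrFun hG 1) 1; simp at this; linarith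
  have g22 : y.2 2 2 = 0 := by have := congrFun (congrFun hG 2) 2; simp at this; linarith
  ext i j
  fin_cases i <;> fin_cases j <;>
    · simp [Fintype.sum_prod_type, Fin.sum_univ_succ, Matrix.sum_apply, dd,
        Fin.sum_univ_three, Cr, Dr, sg, w1, w2, w1z, w2z, f1z, f2z,
        vecMulVec_apply, Matrix.one_apply, Matrix.trace_fin_three]
      try simp only [h10, h20, h21, g10, g20, g21, g00, g11, g22]
      ring

set_option maxHeartbeats 2000000 in
theorem sumB (y : X3) (hR : y.1.IsSymm) (hG : y.2ᵀ = -y.2) :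
    ∑ p : Fin 8 × Bool, (1 + sg p * dd p.1 y / 2) •
      (vecMulVec (w1 p) (w2 p) - vecMulVec (w2 p) (w1 p))
      = y.2 := by
  have h10 : y.1 1 0 = y.1 0 1 := hR.apply 0 1
  have h20 : y.1 2 0 = y.1 0 2 := hR.apply 0 2
  have h21 : y.1 2 1 = y.1 1 2 := hR.apply 1 2
  have g10 : y.2 1 0 = -y.2 0 1 := by have := congrFun (congrFun hG 0) 1; simpa using this
  have g20 : y.2 2 0 = -y.2 0 2 := by have := congrFun (congrFun hG 0) 2; simpa using this
  have g21 : y.2 2 1 = -y.2 1 2 := by have := congrFun (congrFun hG 1) 2; simpa using this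
  have g00 : y.2 0 0 = 0 := by have := congrFun (congrFun hG 0) 0; simp at this; linarith
  have g11 : y.2 1 1 = 0 := by have := congrFun (congrFun hG 1) 1; simp at this; linarith
  have g22 : y.2 2 2 = 0 := by have := congrFun (congrFun hG 2) 2; simp at this; linarith
  ext i j
  fin_cases i <;> fin_cases j <;>
    · simp [Fintype.sum_prod_type, Fin.sum_univ_succ, Matrix.sum_apply, dd,
        Fin.sum_univ_three, Cr, Dr, sg, w1, w2, w1z, w2z, f1z, f2z,
        vecMulVec_apply, Matrix.one_apply, Matrix.trace_fin_three]
      try simp only [h10, h20, h21, g10, g20, g21, g00, g11, g22]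
      ring

end CGL
end CGLaux


open Matrix

set_option maxHeartbeats 1000000 in
/-- Coupled geometric lemma: simultaneous decomposition of a symmetric tensor `R`
(up to a pressure multiple of the identity) and a skew-symmetric tensor `G`, using
the same positive coefficients `Γ_η²`; the direction set `Λ` can avoid any
prescribed finite set `F` of unit vectors. -/
theorem coupled_geometric_lemma
    (F : Finset (Fin 3 → ℝ)) (hF : ∀ v ∈ F, dot3 v v = 1) :
    ∃ (ε : ℝ) (Λ : Finset (Fin 3 → ℝ))
      (η₁ η₂ : (Fin 3 → ℝ) → (Fin 3 → ℝ))
      (Γ : (Fin 3 → ℝ) → Matrix (Fin 3) (Fin 3) ℝ × Matrix (Fin 3) (Fin 3) ℝ → ℝ)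
      (p : Matrix (Fin 3) (Fin 3) ℝ × Matrix (Fin 3) (Fin 3) ℝ → ℝ),
      0 < ε ∧
      (∀ η ∈ Λ, RatCoords η ∧ IsONFrame η (η₁ η) (η₂ η)) ∧
      (∀ η ∈ Λ, η ∉ F) ∧
      (∀ η ∈ Λ, ContDiffOn ℝ (⊤ : ℕ∞) (Γ η)
        (Metric.ball (0 : Matrix (Fin 3) (Fin 3) ℝ × Matrix (Fin 3) (Fin 3) ℝ) ε)) ∧
      ContDiffOn ℝ (⊤ : ℕ∞) p
        (Metric.ball (0 : Matrix (Fin 3) (Fin 3) ℝ × Matrix (Fin 3) (Fin 3) ℝ) ε) ∧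
      (∀ η ∈ Λ, ∀ x ∈ Metric.ball
          (0 : Matrix (Fin 3) (Fin 3) ℝ × Matrix (Fin 3) (Fin 3) ℝ) ε, 0 < Γ η x) ∧
      (∀ R G : Matrix (Fin 3) (Fin 3) ℝ, R.IsSymm → G.transpose = -G →
        ‖R‖ + ‖G‖ < ε →
        (R - p (R, G) • (1 : Matrix (Fin 3) (Fin 3) ℝ)
            = ∑ η ∈ Λ, (Γ η (R, G)) ^ 2 •
                (Matrix.vecMulVec (η₁ η) (η₁ η) - Matrix.vecMulVec (η₂ η) (η₂ η)) ∧
         G = ∑ η ∈ Λ, (Γ η (R, G)) ^ 2 •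
                (Matrix.vecMulVec (η₁ η) (η₂ η) - Matrix.vecMulVec (η₂ η) (η₁ η)))) := by
  classical
  -- choose the rotation parameter n avoiding F
  obtain ⟨n, hnF⟩ : ∃ n : ℕ, ∀ p : Fin 8 × Bool, (CGL.Qr n *ᵥ CGL.bv p) ∉ F := by
    by_contra hcon
    push_neg at hcon
    have hmaps : ∀ a ∈ Finset.range (16 * F.card + 1),
        (fun m => ((hcon m).choose, CGL.Qr m *ᵥ CGL.bv (hcon m).choose)) a
          ∈ (Finset.univ : Finset (Fin 8 × Bool)) ×ˢ F := by
      intro a _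
      exact Finset.mem_product.mpr ⟨Finset.mem_univ _, (hcon a).choose_spec⟩
    have hcard : ((Finset.univ : Finset (Fin 8 × Bool)) ×ˢ F).card
        < (Finset.range (16 * F.card + 1)).card := by
      rw [Finset.card_product, Finset.card_range, Finset.card_univ]
      simp only [Fintype.card_prod, Fintype.card_fin, Fintype.card_bool]
      omega
    obtain ⟨a, -, b, -, hab, heq⟩ :=
      Finset.exists_ne_map_eq_of_card_lt_of_maps_to hcard hmaps
    have h1 : (hcon a).choose = (hcon b).choose := congrArg Prod.fst heq
    have h2 : CGL.Qr a *ᵥ CGL.bv (hcon a).choose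
        = CGL.Qr b *ᵥ CGL.bv (hcon a).choose := by
      have := congrArg Prod.snd heq
      simpa [← h1] using this
    exact hab (CGL.Qn_inj (hcon a).choose h2)
  refine ⟨1/1000,
    (Finset.univ : Finset (Fin 8 × Bool)).image (fun p => CGL.Qr n *ᵥ CGL.bv p),
    fun η => CGL.Qr n *ᵥ CGL.w1 (CGL.pidx n η),
    fun η => CGL.Qr n *ᵥ CGL.w2 (CGL.pidx n η),
    fun η x => Real.sqrt (CGL.ccf n (CGL.pidx n η) x),
    fun x => x.1.trace / 3, by norm_num, ?_, ?_, ?_, ?_, ?_, ?_⟩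
  · -- RatCoords and frames
    intro η hη
    obtain ⟨p, -, rfl⟩ := Finset.mem_image.mp hη
    constructor
    · intro i
      refine ⟨∑ j, CGL.Qq n i j * ((CGL.bvz p j : ℚ)/3), ?_⟩
      show (CGL.Qr n *ᵥ CGL.bv p) i = _
      simp only [CGL.Qr, Matrix.mulVec, dotProduct, CGL.bv, Matrix.map_apply,
        Fin.sum_univ_three]
      push_cast
      ring
    · simp only [CGL.pidx_spec]
      obtain ⟨e1, e2, e3, e4, e5, e6⟩ := CGL.frames p
      have hQ := CGL.Qr_orth n
      exact ⟨by rw [CGL.dot3_Q _ hQ]; exact e1, by rw [CGL.dot3_Q _ hQ]; exact e2,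
        by rw [CGL.dot3_Q _ hQ]; exact e3, by rw [CGL.dot3_Q _ hQ]; exact e4,
        by rw [CGL.dot3_Q _ hQ]; exact e5, by rw [CGL.dot3_Q _ hQ]; exact e6⟩
  · -- avoid F
    intro η hη
    obtain ⟨p, -, rfl⟩ := Finset.mem_image.mp hη
    exact hnF p
  · -- smoothness of Γ
    intro η hη
    obtain ⟨p, -, rfl⟩ := Finset.mem_image.mp hη
    simp only [CGL.pidx_spec]
    intro x hx
    have hb : ‖x.1‖ + ‖x.2‖ < 1/250 := by
      have h1 := norm_fst_le x
      have h2 := norm_snd_le x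
      have h3 : ‖x‖ < 1/1000 := by simpa using Metric.mem_ball.mp hx
      linarith
    have hpos : 0 < CGL.ccf n p x := by linarith [CGL.ccf_pos n p hb]
    exact ((Real.contDiffAt_sqrt hpos.ne').comp x
      (CGL.contDiff_ccf n p).contDiffAt).contDiffWithinAt
  · -- smoothness of p
    exact CGL.contDiff_pfun.contDiffOn
  · -- positivity of Γ
    intro η hη x hx
    obtain ⟨p, -, rfl⟩ := Finset.mem_image.mp hη
    simp only [CGL.pidx_spec]
    have hb : ‖x.1‖ + ‖x.2‖ < 1/250 := by
      have h1 := norm_fst_le x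
      have h2 := norm_snd_le x
      have h3 : ‖x‖ < 1/1000 := by simpa using Metric.mem_ball.mp hx
      linarith
    exact Real.sqrt_pos.mpr (by linarith [CGL.ccf_pos n p hb])
  · -- the two identities
    intro R G hR hG hnorm
    have hb : ‖(R, G).1‖ + ‖(R, G).2‖ < 1/250 := by
      simpa using hnorm.trans_le (by norm_num)
    have hcc : ∀ p : Fin 8 × Bool, 0 < CGL.ccf n p (R, G) :=
      fun p => by linarith [CGL.ccf_pos n p hb]
    set y : CGL.X3 := CGL.conj n (R, G) with hy
    have hR' : y.1.IsSymm := CGL.conj_symm n hR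
    have hG' : y.2ᵀ = -y.2 := CGL.conj_skew n hG
    have hmain := CGL.sumA y hR' hG'
    have hmainB := CGL.sumB y hR' hG'
    have hinj : ∀ a ∈ (Finset.univ : Finset (Fin 8 × Bool)),
        ∀ b ∈ (Finset.univ : Finset (Fin 8 × Bool)),
        (fun p => CGL.Qr n *ᵥ CGL.bv p) a = (fun p => CGL.Qr n *ᵥ CGL.bv p) b → a = b :=
      fun a _ b _ h => CGL.Qbv_inj n h
    have hccrw : ∀ p : Fin 8 × Bool,
        (Real.sqrt (CGL.ccf n p (R, G)))^2 = 1 + CGL.sg p * CGL.dd p.1 y / 2 := by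
      intro p
      rw [Real.sq_sqrt (hcc p).le]
      rfl
    constructor
    · rw [Finset.sum_image hinj]
      have hterm : ∀ p : Fin 8 × Bool,
          (Real.sqrt (CGL.ccf n (CGL.pidx n (CGL.Qr n *ᵥ CGL.bv p)) (R, G)))^2 •
            (Matrix.vecMulVec (CGL.Qr n *ᵥ CGL.w1 (CGL.pidx n (CGL.Qr n *ᵥ CGL.bv p)))
                (CGL.Qr n *ᵥ CGL.w1 (CGL.pidx n (CGL.Qr n *ᵥ CGL.bv p)))
              - Matrix.vecMulVec (CGL.Qr n *ᵥ CGL.w2 (CGL.pidx n (CGL.Qr n *ᵥ CGL.bv p)))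
                (CGL.Qr n *ᵥ CGL.w2 (CGL.pidx n (CGL.Qr n *ᵥ CGL.bv p))))
          = CGL.Qr n * ((1 + CGL.sg p * CGL.dd p.1 y / 2) •
              (Matrix.vecMulVec (CGL.w1 p) (CGL.w1 p)
                - Matrix.vecMulVec (CGL.w2 p) (CGL.w2 p))) * (CGL.Qr n)ᵀ := by
        intro p
        rw [CGL.pidx_spec, hccrw p, CGL.vmv_conj, CGL.vmv_conj,
          Matrix.mul_smul, Matrix.smul_mul, Matrix.mul_sub, Matrix.sub_mul]
      rw [Finset.sum_congr rfl (fun p _ => hterm p), ← Finset.sum_mul, ← Matrix.mul_sum,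
        hmain]
      have hy1 : y.1 = (CGL.Qr n)ᵀ * R * CGL.Qr n := rfl
      rw [Matrix.mul_sub, Matrix.sub_mul, hy1, CGL.unconj n R]
      have htr : ((CGL.Qr n)ᵀ * R * CGL.Qr n).trace = R.trace := CGL.trace_conj n R
      rw [htr]
      have hone : CGL.Qr n * ((R.trace / 3) • (1 : CGL.M3)) * (CGL.Qr n)ᵀ
          = (R.trace / 3) • (1 : CGL.M3) := by
        rw [Matrix.mul_smul, Matrix.mul_one, Matrix.smul_mul, CGL.Qr_orth' n]
      rw [hone]
      try rfl
    · rw [Finset.sum_image hinj]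
      have hterm : ∀ p : Fin 8 × Bool,
          (Real.sqrt (CGL.ccf n (CGL.pidx n (CGL.Qr n *ᵥ CGL.bv p)) (R, G)))^2 •
            (Matrix.vecMulVec (CGL.Qr n *ᵥ CGL.w1 (CGL.pidx n (CGL.Qr n *ᵥ CGL.bv p)))
                (CGL.Qr n *ᵥ CGL.w2 (CGL.pidx n (CGL.Qr n *ᵥ CGL.bv p)))
              - Matrix.vecMulVec (CGL.Qr n *ᵥ CGL.w2 (CGL.pidx n (CGL.Qr n *ᵥ CGL.bv p)))
                (CGL.Qr n *ᵥ CGL.w1 (CGL.pidx n (CGL.Qr n *ᵥ CGL.bv p))))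
          = CGL.Qr n * ((1 + CGL.sg p * CGL.dd p.1 y / 2) •
              (Matrix.vecMulVec (CGL.w1 p) (CGL.w2 p)
                - Matrix.vecMulVec (CGL.w2 p) (CGL.w1 p))) * (CGL.Qr n)ᵀ := by
        intro p
        rw [CGL.pidx_spec, hccrw p, CGL.vmv_conj, CGL.vmv_conj,
          Matrix.mul_smul, Matrix.smul_mul, Matrix.mul_sub, Matrix.sub_mul]
      rw [Finset.sum_congr rfl (fun p _ => hterm p), ← Finset.sum_mul, ← Matrix.mul_sum,
        hmainB]
      have hy2 : y.2 = (CGL.Qr n)ᵀ * G * CGL.Qr n := rfl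
      rw [hy2, CGL.unconj n G]
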